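/- arXiv:1409.6899 — 3 statements merged into one kernel-verified Lean document; each statement's English description precedes it below -/
import Mathlib

section
/- Let A be a Dedekind domain with fraction field K, and let K ⊆ L ⊆ M be finite separable extensions with B, C the integral closures of A in L, M respectively. Then the differents satisfy 𝔇_{C/A} = 𝔇_{C/B} · 𝔇_{B/A} as ideals of C. -/
theorem differentIdeal_transitivity_general
    (A K L M B C : Type*)
    [CommRing A] [IsDedekindDomain A]
    [Field K] [Field L] [Field M]
    [Algebra A K] [IsFractionRing A K]
    [Algebra K L] [Algebra K M] [Algebra L M] [IsScalarTower K L M]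
    [FiniteDimensional K L] [Algebra.IsSeparable K L]
    [FiniteDimensional L M] [Algebra.IsSeparable L M]
    [FiniteDimensional K M] [Algebra.IsSeparable K M]
    [CommRing B] [IsDedekindDomain B]
    [CommRing C] [IsDedekindDomain C]
    [Algebra A B] [Algebra B L] [Algebra A L]
    [IsScalarTower A B L] [IsScalarTower A K L]
    [IsFractionRing B L] [IsIntegralClosure B A L]
    [Algebra B C] [Algebra C M] [Algebra B M]
    [IsScalarTower B C M] [IsScalarTower B L M]
    [IsFractionRing C M] [IsIntegralClosure C B M]
    [Algebra A C] [Algebra A M]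
    [IsScalarTower A C M] [IsScalarTower A K M]
    [IsIntegralClosure C A M]
    [NoZeroSMulDivisors A B] [NoZeroSMulDivisors B C] [NoZeroSMulDivisors A C] :
    differentIdeal A C =
      differentIdeal B C * Ideal.map (algebraMap B C) (differentIdeal A B) := by
  rw [← FractionalIdeal.coeIdeal_inj (K := M), FractionalIdeal.coeIdeal_mul,
    coeIdeal_differentIdeal A K M, coeIdeal_differentIdeal B L M,
    ← FractionalIdeal.extendedHom_coeIdeal_eq_map (K := L), coeIdeal_differentIdeal A K L,
    map_inv₀, ← mul_inv, FractionalIdeal.dual_eq_dual_mul_dual A K L B C M]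

/-- **Transitivity of the different.**  Let `A` be a Dedekind domain with
fraction field `K`, and let `K ⊆ L ⊆ M` be finite separable extensions with `B`, `C`
the integral closures of `A` in `L`, `M` respectively.  Then the differents satisfy
`𝔇_{C/A} = 𝔇_{C/B} · 𝔇_{B/A}` as ideals of `C` (where `𝔇_{B/A}` is extended to an
ideal of `C` along `B → C`). -/
theorem differentIdeal_transitivity
    (A K L M B C : Type*)
    [CommRing A] [IsDomain A] [IsDedekindDomain A]
    [Field K] [Field L] [Field M]
    [Algebra A K] [IsFractionRing A K]
    [Algebra K L] [Algebra K M] [Algebra L M] [IsScalarTower K L M]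
    [FiniteDimensional K L] [Algebra.IsSeparable K L]
    [FiniteDimensional L M] [Algebra.IsSeparable L M]
    [FiniteDimensional K M] [Algebra.IsSeparable K M]
    [CommRing B] [IsDomain B] [IsDedekindDomain B]
    [CommRing C] [IsDomain C] [IsDedekindDomain C]
    [Algebra A B] [Algebra B L] [Algebra A L]
    [IsScalarTower A B L] [IsScalarTower A K L]
    [IsFractionRing B L] [IsIntegralClosure B A L]
    [Algebra B C] [Algebra C M] [Algebra B M]
    [IsScalarTower B C M] [IsScalarTower B L M]
    [IsFractionRing C M] [IsIntegralClosure C B M]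
    [Algebra A C] [Algebra A M]
    [IsScalarTower A B C] [IsScalarTower A C M] [IsScalarTower A K M]
    [IsIntegralClosure C A M]
    [NoZeroSMulDivisors A B] [NoZeroSMulDivisors B C] [NoZeroSMulDivisors A C] :
    differentIdeal A C =
      differentIdeal B C * Ideal.map (algebraMap B C) (differentIdeal A B) :=
  differentIdeal_transitivity_general A K L M B C
end

section
/- Let L/K be a finite totally ramified Galois extension of complete discretely valued fields with Galois group G = Gal(L/K), valuation ring B of L with maximal ideal 𝔪_L, and π a uniformizer of L. For each i ≥ 0 the map σ ↦ σ(π)/π mod U_L^{i+1} induces an injective group homomorphism G_i/G_{i+1} ↪ U_L^i/U_L^{i+1}, independent of the choice of uniformizer π, where U_L^0 = B^× and U_L^i = 1 + 𝔪_L^i for i > 0. -/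
open Classical Polynomial

/-- The distance `dist x y = exp (-v (x - y))` attached to a discrete valuation `v`
(with the convention `dist x x = 0`). -/
noncomputable def vdist {L : Type*} [Field L] (v : L → ℤ) (x y : L) : ℝ :=
  if x = y then 0 else Real.exp (-(v (x - y) : ℝ))

/-- Completeness of a discretely valued field: every Cauchy sequence for the
valuation metric converges. -/
def VComplete {L : Type*} [Field L] (v : L → ℤ) : Prop :=
  ∀ a : ℕ → L,
    (∀ ε : ℝ, 0 < ε → ∃ N : ℕ, ∀ m n : ℕ, N ≤ m → N ≤ n → vdist v (a m) (a n) < ε) →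
    ∃ l : L, ∀ ε : ℝ, 0 < ε → ∃ N : ℕ, ∀ n : ℕ, N ≤ n → vdist v (a n) l < ε

/-- Membership in the valuation ring `{x : v x ≥ 0}` of a discretely valued field. -/
def InIntegers {L : Type*} [Field L] (v : L → ℤ) (x : L) : Prop :=
  x = 0 ∨ 0 ≤ v x

/-- `v` is a normalized discrete valuation on the field `L` : it is surjective onto `ℤ`,
multiplicative and satisfies the ultrametric inequality (on nonzero elements). -/
def IsDiscreteValuationOn (L : Type*) [Field L] (v : L → ℤ) : Prop :=
  (∀ n : ℤ, ∃ x : L, x ≠ 0 ∧ v x = n) ∧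
  (∀ x y : L, x ≠ 0 → y ≠ 0 → v (x * y) = v x + v y) ∧
  (∀ x y : L, x ≠ 0 → y ≠ 0 → x + y ≠ 0 → min (v x) (v y) ≤ v (x + y))

/-- The residue field extension of `L/K` is separable: the residue class of each
integral element of `L` is a simple root of (the reduction of) a polynomial with
integral coefficients in `K`. -/
def ResidueSeparable (K L : Type*) [Field K] [Field L] [Algebra K L] (v : L → ℤ) : Prop :=
  ∀ x : L, InIntegers v x →
    ∃ g : Polynomial K,
      (∀ n : ℕ, InIntegers v (algebraMap K L (g.coeff n))) ∧
      (aeval x g = 0 ∨ 0 < v (aeval x g)) ∧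
      aeval x (derivative g) ≠ 0 ∧ v (aeval x (derivative g)) = 0

/-- The residue characteristic of `(L, v)` is `p` : either `p` is a prime belonging to
the maximal ideal of the valuation ring, or `p = 0` and every prime is a unit of the
valuation ring. -/
def ResidueCharIs {L : Type*} [Field L] (v : L → ℤ) (p : ℕ) : Prop :=
  (p.Prime ∧ ((p : L) = 0 ∨ 0 < v ((p : L)))) ∨
  (p = 0 ∧ ∀ q : ℕ, q.Prime → ((q : L) ≠ 0 ∧ v ((q : L)) = 0))

/-- `σ ∈ G_i`, the `i`-th ramification group of `L/K` in the lower numbering: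
`v (σ x - x) ≥ i + 1` for every `x` in the valuation ring of `L`. -/
def InRamificationGroup (K : Type*) {L : Type*} [Field K] [Field L] [Algebra K L]
    (v : L → ℤ) (i : ℤ) (σ : L ≃ₐ[K] L) : Prop :=
  ∀ x : L, InIntegers v x → (σ x = x ∨ i + 1 ≤ v (σ x - x))

/-- Congruence of two elements of `L^×` modulo the higher unit group `U_L^i`:
`c ≡ d mod U_L^i` iff `v (c/d - 1) ≥ i`. -/
def CongUnits {L : Type*} [Field L] (v : L → ℤ) (i : ℤ) (c d : L) : Prop :=
  c = d ∨ i ≤ v (c / d - 1)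

/-
Every `σ ∈ G_i` (`i ≥ 0`) maps the valuation ring `B` into itself, so `v ∘ σ` is a normalized
discrete valuation whose ring contains `B`; hence `v ∘ σ = v`. For a unit `u`, `σ ∈ G_i` gives
`σ(u)/u ∈ U_L^{i+1}`, and since `σ(πu)/(πu) = (σ(π)/π)(σ(u)/u)` this yields both the
multiplicativity and the independence of `π`. For the kernel, total ramification writes every
integral `x` as `a + π x₁` with `a ∈ K`, so that
`σ(x) - x = σ(x₁)(σ(π) - π) + (σ(x₁) - x₁) π`; induction on the precision then shows that
`σ(x) ≡ x` modulo `𝔪_L^{j+1}` as soon as `σ(π) ≡ π` modulo `𝔪_L^{j+1}`, i.e. membership in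
`G_j` is detected on `π` alone.
-/

/-- `a ∈ 𝔪_L^n = π^n B` (a fractional ideal when `n < 0`). -/
def InMaxIdealPow {L : Type*} [Field L] (v : L → ℤ) (n : ℤ) (a : L) : Prop :=
  a = 0 ∨ n ≤ v a

namespace IsDiscreteValuationOn

variable {L : Type*} [Field L] {v : L → ℤ} {x y : L}

theorem map_mul (hv : IsDiscreteValuationOn L v) (hx : x ≠ 0) (hy : y ≠ 0) :
    v (x * y) = v x + v y :=
  hv.2.1 x y hx hy

theorem map_one (hv : IsDiscreteValuationOn L v) : v 1 = 0 := by
  have h := hv.map_mul one_ne_zero one_ne_zero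
  rw [mul_one] at h
  omega

theorem map_inv (hv : IsDiscreteValuationOn L v) (hx : x ≠ 0) : v x⁻¹ = -v x := by
  have h := hv.map_mul hx (inv_ne_zero hx)
  rw [mul_inv_cancel₀ hx, hv.map_one] at h
  omega

theorem map_div (hv : IsDiscreteValuationOn L v) (hx : x ≠ 0) (hy : y ≠ 0) :
    v (x / y) = v x - v y := by
  rw [div_eq_mul_inv, hv.map_mul hx (inv_ne_zero hy), hv.map_inv hy, sub_eq_add_neg]

theorem map_neg (hv : IsDiscreteValuationOn L v) (hx : x ≠ 0) : v (-x) = v x := by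
  have hneg_one : v (-1) = 0 := by
    have h := hv.map_mul (neg_ne_zero.2 (one_ne_zero (α := L))) (neg_ne_zero.2 one_ne_zero)
    rw [neg_mul_neg, mul_one, hv.map_one] at h
    omega
  rw [neg_eq_neg_one_mul, hv.map_mul (neg_ne_zero.2 one_ne_zero) hx, hneg_one, zero_add]

theorem map_pow (hv : IsDiscreteValuationOn L v) (hx : x ≠ 0) (n : ℕ) :
    v (x ^ n) = n * v x := by
  induction n with
  | zero => simp [hv.map_one]
  | succ n ih =>
    rw [pow_succ, hv.map_mul (pow_ne_zero n hx) hx, ih]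
    push_cast
    ring

theorem map_zpow (hv : IsDiscreteValuationOn L v) (hx : x ≠ 0) (n : ℤ) :
    v (x ^ n) = n * v x := by
  obtain ⟨n, rfl | rfl⟩ := n.eq_nat_or_neg
  · rw [zpow_natCast, hv.map_pow hx]
  · rw [zpow_neg, zpow_natCast, hv.map_inv (pow_ne_zero n hx), hv.map_pow hx]
    ring

theorem comp_ringEquiv (hv : IsDiscreteValuationOn L v) (σ : L ≃+* L) :
    IsDiscreteValuationOn L (v ∘ σ) := by
  refine ⟨fun n => ?_, fun x y hx hy => ?_, fun x y hx hy hxy => ?_⟩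
  · obtain ⟨x, hx0, hx⟩ := hv.1 n
    exact ⟨σ.symm x, by simpa using hx0, by simpa using hx⟩
  · simpa using hv.map_mul ((map_ne_zero σ).2 hx) ((map_ne_zero σ).2 hy)
  · simpa using hv.2.2 (σ x) (σ y) ((map_ne_zero σ).2 hx) ((map_ne_zero σ).2 hy)
      (by rwa [← map_add, _root_.map_ne_zero])

/-- Units of the smaller ring are units of the larger one, so `w = v · w(p)` for a
`v`-uniformizer `p`; surjectivity of `w` then forces `w(p) = 1`. -/
theorem eq_of_integers_subset (hv : IsDiscreteValuationOn L v) {w : L → ℤ}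
    (hw : IsDiscreteValuationOn L w) (H : ∀ x, x ≠ 0 → 0 ≤ v x → 0 ≤ w x) (hx : x ≠ 0) :
    w x = v x := by
  have unit : ∀ u, u ≠ 0 → v u = 0 → w u = 0 := fun u hu hvu => by
    have h₁ := H u hu hvu.ge
    have h₂ := H u⁻¹ (inv_ne_zero hu) (by rw [hv.map_inv hu]; omega)
    rw [hw.map_inv hu] at h₂
    omega
  obtain ⟨p, hp0, hp⟩ := hv.1 1
  have factor : ∀ y, y ≠ 0 → w y = v y * w p := fun y hy => by
    have hpy : p ^ (-v y) ≠ 0 := zpow_ne_zero _ hp0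
    have h := unit _ (mul_ne_zero hy hpy) (by rw [hv.map_mul hy hpy, hv.map_zpow hp0, hp]; ring)
    rw [hw.map_mul hy hpy, hw.map_zpow hp0] at h
    linarith
  obtain ⟨t, ht0, ht⟩ := hw.1 1
  have hwp : w p = 1 :=
    Int.eq_one_of_mul_eq_one_left (H p hp0 (by omega)) (by rw [← factor t ht0, ht])
  rw [factor x hx, hwp, mul_one]

end IsDiscreteValuationOn

namespace InMaxIdealPow

variable {L : Type*} [Field L] {v : L → ℤ} {m n : ℤ} {a b : L}

theorem mono (hmn : m ≤ n) (ha : InMaxIdealPow v n a) : InMaxIdealPow v m a :=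
  ha.imp_right hmn.trans

theorem self : InMaxIdealPow v (v a) a :=
  Or.inr le_rfl

theorem add (hv : IsDiscreteValuationOn L v) (ha : InMaxIdealPow v n a)
    (hb : InMaxIdealPow v n b) : InMaxIdealPow v n (a + b) := by
  rcases eq_or_ne a 0 with rfl | ha0
  · rwa [zero_add]
  rcases eq_or_ne b 0 with rfl | hb0
  · rwa [add_zero]
  rcases eq_or_ne (a + b) 0 with hab | hab
  · exact Or.inl hab
  have h := hv.2.2 a b ha0 hb0 hab
  exact Or.inr (le_trans (le_min (ha.resolve_left ha0) (hb.resolve_left hb0)) h)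

theorem neg (hv : IsDiscreteValuationOn L v) (ha : InMaxIdealPow v n a) :
    InMaxIdealPow v n (-a) := by
  rcases eq_or_ne a 0 with rfl | ha0
  · exact Or.inl neg_zero
  · exact Or.inr (by rw [hv.map_neg ha0]; exact ha.resolve_left ha0)

theorem sub (hv : IsDiscreteValuationOn L v) (ha : InMaxIdealPow v n a)
    (hb : InMaxIdealPow v n b) : InMaxIdealPow v n (a - b) := by
  rw [sub_eq_add_neg]
  exact ha.add hv (hb.neg hv)

theorem mul (hv : IsDiscreteValuationOn L v) (ha : InMaxIdealPow v m a)
    (hb : InMaxIdealPow v n b) : InMaxIdealPow v (m + n) (a * b) := by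
  rcases eq_or_ne a 0 with rfl | ha0
  · exact Or.inl (zero_mul b)
  rcases eq_or_ne b 0 with rfl | hb0
  · exact Or.inl (mul_zero a)
  rw [InMaxIdealPow, hv.map_mul ha0 hb0]
  exact Or.inr (add_le_add (ha.resolve_left ha0) (hb.resolve_left hb0))

theorem div (hv : IsDiscreteValuationOn L v) (ha : InMaxIdealPow v n a) (hb : b ≠ 0) :
    InMaxIdealPow v (n - v b) (a / b) := by
  rcases eq_or_ne a 0 with rfl | ha0
  · exact Or.inl (zero_div b)
  rw [InMaxIdealPow, hv.map_div ha0 hb]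
  exact Or.inr (sub_le_sub_right (ha.resolve_left ha0) _)

theorem map_algEquiv {K : Type*} [Field K] [Algebra K L] {σ : L ≃ₐ[K] L}
    (hσ : ∀ x, x ≠ 0 → v (σ x) = v x) (ha : InMaxIdealPow v n a) :
    InMaxIdealPow v n (σ a) := by
  rcases eq_or_ne a 0 with rfl | ha0
  · exact Or.inl (map_zero σ)
  · exact Or.inr (by rw [hσ a ha0]; exact ha.resolve_left ha0)

end InMaxIdealPow

section CongUnits

variable {L : Type*} [Field L] {v : L → ℤ} {j : ℤ} {a b c d : L}

theorem congUnits_iff_inMaxIdealPow (hv : IsDiscreteValuationOn L v) (hd : d ≠ 0) :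
    CongUnits v j c d ↔ InMaxIdealPow v (j + v d) (c - d) := by
  unfold CongUnits InMaxIdealPow
  rcases eq_or_ne c d with rfl | hcd
  · simp
  have hcd' : c - d ≠ 0 := sub_ne_zero.2 hcd
  rw [show c / d - 1 = (c - d) / d by field_simp, hv.map_div hcd' hd]
  simp only [hcd, hcd', false_or]
  omega

theorem congUnits_div_one_iff (ha : a ≠ 0) : CongUnits v j (b / a) 1 ↔ CongUnits v j b a := by
  unfold CongUnits
  rw [div_one, div_eq_one_iff_eq ha]

theorem congUnits_mul_left_iff (hc : c ≠ 0) :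
    CongUnits v j (c * a) (c * b) ↔ CongUnits v j a b := by
  unfold CongUnits
  rw [mul_right_inj' hc, mul_div_mul_left a b hc]

end CongUnits

section RamificationGroups

variable {K L : Type*} [Field K] [Field L] [Algebra K L] {v : L → ℤ} {i j : ℤ}
  {σ : L ≃ₐ[K] L} {π : L}

theorem inRamificationGroup_iff_inMaxIdealPow :
    InRamificationGroup K v i σ ↔ ∀ x, InIntegers v x → InMaxIdealPow v (i + 1) (σ x - x) := by
  simp only [InRamificationGroup, InMaxIdealPow, sub_eq_zero]

namespace InRamificationGroup

theorem inMaxIdealPow_sub (hσ : InRamificationGroup K v i σ) {x : L} (hx : InIntegers v x) :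
    InMaxIdealPow v (i + 1) (σ x - x) :=
  inRamificationGroup_iff_inMaxIdealPow.1 hσ x hx

theorem valuation_map_eq (hv : IsDiscreteValuationOn L v) (hi : -1 ≤ i)
    (hσ : InRamificationGroup K v i σ) {x : L} (hx : x ≠ 0) : v (σ x) = v x := by
  refine hv.eq_of_integers_subset (hv.comp_ringEquiv σ.toRingEquiv) (fun y hy0 hy => ?_) hx
  have h : InMaxIdealPow v 0 (σ y - y + y) :=
    ((hσ.inMaxIdealPow_sub (Or.inr hy)).mono (by omega)).add hv (Or.inr hy)
  rw [sub_add_cancel] at h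
  exact h.resolve_left ((map_ne_zero σ).2 hy0)

theorem congUnits_apply_of_valuation_eq_zero (hv : IsDiscreteValuationOn L v)
    (hσ : InRamificationGroup K v i σ) {u : L} (hu : u ≠ 0) (hvu : v u = 0) :
    CongUnits v (i + 1) (σ u) u := by
  rw [congUnits_iff_inMaxIdealPow hv hu, hvu, add_zero]
  exact hσ.inMaxIdealPow_sub (Or.inr hvu.ge)

end InRamificationGroup

theorem inRamificationGroup_of_inMaxIdealPow_sub_uniformizer (hv : IsDiscreteValuationOn L v)
    (hres : ∀ x, InIntegers v x → ∃ y : K, InMaxIdealPow v 1 (x - algebraMap K L y))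
    (hπ0 : π ≠ 0) (hπ : v π = 1) (hσv : ∀ x, x ≠ 0 → v (σ x) = v x)
    (hσπ : InMaxIdealPow v (j + 1) (σ π - π)) : InRamificationGroup K v j σ := by
  suffices h : ∀ n : ℕ, ∀ x, InIntegers v x → InMaxIdealPow v (min (j + 1) n) (σ x - x) by
    rw [inRamificationGroup_iff_inMaxIdealPow]
    exact fun x hx => (h (j + 1).toNat x hx).mono (by omega)
  intro n
  induction n with
  | zero => exact fun x hx => ((InMaxIdealPow.map_algEquiv hσv hx).sub hv hx).mono (by omega)
  | succ n ih =>
    intro x hx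
    obtain ⟨y, hy⟩ := hres x hx
    obtain ⟨x₁, hx₁, rfl⟩ : ∃ x₁, InIntegers v x₁ ∧ x = algebraMap K L y + x₁ * π := by
      have h := hy.div hv hπ0
      rw [hπ, sub_self] at h
      exact ⟨_, h, by field_simp; ring⟩
    have hdecomp : σ (algebraMap K L y + x₁ * π) - (algebraMap K L y + x₁ * π) =
        σ x₁ * (σ π - π) + (σ x₁ - x₁) * π := by
      rw [map_add, map_mul, σ.commutes]
      ring
    rw [hdecomp]
    have h₁ := (InMaxIdealPow.map_algEquiv hσv hx₁).mul hv hσπ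
    have h₂ := (ih x₁ hx₁).mul hv (InMaxIdealPow.self (v := v) (a := π))
    rw [hπ] at h₂
    exact (h₁.mono (by omega)).add hv (h₂.mono (by omega))

theorem inRamificationGroup_iff_congUnits_uniformizer (hv : IsDiscreteValuationOn L v)
    (hres : ∀ x, InIntegers v x → ∃ y : K, InMaxIdealPow v 1 (x - algebraMap K L y))
    (hπ0 : π ≠ 0) (hπ : v π = 1) (hσv : ∀ x, x ≠ 0 → v (σ x) = v x) :
    InRamificationGroup K v j σ ↔ CongUnits v j (σ π) π := by
  rw [congUnits_iff_inMaxIdealPow hv hπ0, hπ]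
  exact ⟨fun hσ => hσ.inMaxIdealPow_sub (Or.inr (by omega)),
    inRamificationGroup_of_inMaxIdealPow_sub_uniformizer hv hres hπ0 hπ hσv⟩

end RamificationGroups

theorem ramification_quotient_embeds_in_units_general
    (K L : Type*) [Field K] [Field L] [Algebra K L]
    (v : L → ℤ) (hv : IsDiscreteValuationOn L v)
    (htot : ∀ x : L, InIntegers v x →
      ∃ y : K, InIntegers v (algebraMap K L y) ∧
        (x = algebraMap K L y ∨ 0 < v (x - algebraMap K L y)))
    (π : L) (hπ0 : π ≠ 0) (hπ : v π = 1) (i : ℕ) :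
    (∀ σ : L ≃ₐ[K] L, InRamificationGroup K v i σ →
        v (σ π / π) = 0 ∧ CongUnits v i (σ π / π) 1)
    ∧ (∀ σ τ : L ≃ₐ[K] L, InRamificationGroup K v i σ → InRamificationGroup K v i τ →
        CongUnits v ((i : ℤ) + 1) (σ (τ π) / π) ((σ π / π) * (τ π / π)))
    ∧ (∀ σ : L ≃ₐ[K] L, InRamificationGroup K v i σ →
        (CongUnits v ((i : ℤ) + 1) (σ π / π) 1 ↔ InRamificationGroup K v ((i : ℤ) + 1) σ))
    ∧ (∀ π' : L, π' ≠ 0 → v π' = 1 → ∀ σ : L ≃ₐ[K] L, InRamificationGroup K v i σ →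
        CongUnits v ((i : ℤ) + 1) (σ π / π) (σ π' / π')) := by
  have hσv : ∀ σ : L ≃ₐ[K] L, InRamificationGroup K v i σ → ∀ x, x ≠ 0 → v (σ x) = v x :=
    fun σ hσ _ hx => hσ.valuation_map_eq hv (by omega) hx
  have hσπ0 : ∀ σ : L ≃ₐ[K] L, σ π ≠ 0 := fun σ => (map_ne_zero σ).2 hπ0
  have hres : ∀ x, InIntegers v x → ∃ y : K, InMaxIdealPow v 1 (x - algebraMap K L y) :=
    fun x hx => (htot x hx).imp fun _ hy => hy.2.imp sub_eq_zero.2 fun h => by omega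
  refine ⟨fun σ hσ => ⟨?_, ?_⟩, fun σ τ hσ hτ => ?_, fun σ hσ => ?_, fun π' hπ'0 hπ' σ hσ => ?_⟩
  · rw [hv.map_div (hσπ0 σ) hπ0, hσv σ hσ π hπ0, sub_self]
  · rw [congUnits_div_one_iff hπ0]
    exact (inRamificationGroup_iff_congUnits_uniformizer hv hres hπ0 hπ (hσv σ hσ)).1 hσ
  · have hb0 : τ π / π ≠ 0 := div_ne_zero (hσπ0 τ) hπ0
    have hvb : v (τ π / π) = 0 := by rw [hv.map_div (hσπ0 τ) hπ0, hσv τ hτ π hπ0, sub_self]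
    have h : σ (τ π) / π = σ π / π * σ (τ π / π) := by
      rw [map_div₀]
      field_simp [hσπ0 σ]
    rw [h, congUnits_mul_left_iff (div_ne_zero (hσπ0 σ) hπ0)]
    exact hσ.congUnits_apply_of_valuation_eq_zero hv hb0 hvb
  · rw [congUnits_div_one_iff hπ0]
    exact (inRamificationGroup_iff_congUnits_uniformizer hv hres hπ0 hπ (hσv σ hσ)).symm
  · have hw0 : π / π' ≠ 0 := div_ne_zero hπ0 hπ'0
    have hvw : v (π / π') = 0 := by rw [hv.map_div hπ0 hπ'0, hπ, hπ', sub_self]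
    have h₁ : σ π / π = σ π' / π * σ (π / π') := by
      rw [map_div₀]
      field_simp [hσπ0 σ, (map_ne_zero σ).2 hπ'0]
    have h₂ : σ π' / π' = σ π' / π * (π / π') := by field_simp
    rw [h₁, h₂, congUnits_mul_left_iff (div_ne_zero ((map_ne_zero σ).2 hπ'0) hπ0)]
    exact hσ.congUnits_apply_of_valuation_eq_zero hv hw0 hvw

/-- Let `L/K` be a finite totally ramified Galois extension of
complete discretely valued fields with Galois group `G`, valuation ring `B` of `L` and
uniformizer `π`.  For each `i ≥ 0` the map `σ ↦ σ(π)/π mod U_L^{i+1}` induces an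
injective group homomorphism `G_i/G_{i+1} ↪ U_L^i/U_L^{i+1}`, independent of the choice
of the uniformizer `π`:  for `σ ∈ G_i` the element `σ(π)/π` lies in `U_L^i`; the map is
multiplicative modulo `U_L^{i+1}`; its kernel is exactly `G_{i+1}`; and modulo
`U_L^{i+1}` it does not depend on `π`. -/
theorem ramification_quotient_embeds_in_units
    (K L : Type*) [Field K] [Field L] [Algebra K L]
    [FiniteDimensional K L] [IsGalois K L]
    (v : L → ℤ) (hv : IsDiscreteValuationOn L v)
    (hcomplL : VComplete v)
    (hcomplK : VComplete (fun y : K => v (algebraMap K L y)))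
    (htot : ∀ x : L, InIntegers v x →
      ∃ y : K, InIntegers v (algebraMap K L y) ∧
        (x = algebraMap K L y ∨ 0 < v (x - algebraMap K L y)))
    (π : L) (hπ0 : π ≠ 0) (hπ : v π = 1) (i : ℕ) :
    (∀ σ : L ≃ₐ[K] L, InRamificationGroup K v i σ →
        v (σ π / π) = 0 ∧ CongUnits v i (σ π / π) 1)
    ∧ (∀ σ τ : L ≃ₐ[K] L, InRamificationGroup K v i σ → InRamificationGroup K v i τ →
        CongUnits v ((i : ℤ) + 1) (σ (τ π) / π) ((σ π / π) * (τ π / π)))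
    ∧ (∀ σ : L ≃ₐ[K] L, InRamificationGroup K v i σ →
        (CongUnits v ((i : ℤ) + 1) (σ π / π) 1 ↔ InRamificationGroup K v ((i : ℤ) + 1) σ))
    ∧ (∀ π' : L, π' ≠ 0 → v π' = 1 → ∀ σ : L ≃ₐ[K] L, InRamificationGroup K v i σ →
        CongUnits v ((i : ℤ) + 1) (σ π / π) (σ π' / π')) :=
  ramification_quotient_embeds_in_units_general K L v hv htot π hπ0 hπ i
end

section
/- Let L/K be a finite Galois extension of complete discretely valued fields with separable residue extension of characteristic p. Then G_0/G_1 is a cyclic group of order prime to p (where if p = 0 this means G_1 is trivial and G_0 is cyclic). -/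
open Classical Polynomial

/-!
Fix a uniformizer `π`. An element `σ` of the inertia group `G₀` preserves the valuation, so
`σ ↦ σπ/π` is a unit of the valuation ring, and its residue class gives a homomorphism
`θ₀ : G₀ → k_L^×`. Its kernel is `G₁`: if `σπ ≡ π mod 𝔪²`, then for every integral `x`, a
polynomial `g` over `K` whose reduction has `x̄` as a simple root gives, by a first-order Taylor
expansion, `g'(x) (σx - x) ≡ σ(g x) - g x ≡ 0 mod 𝔪²` with `g'(x)` a unit. Hence `G₀/G₁` is a
finite subgroup of `k_L^×`, which is cyclic of order prime to the characteristic.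

In residue characteristic `0`, `G₁` is trivial: if `ρ ∈ G_i` with `i ≥ 1` and `y = ρx - x`,
telescoping gives `ρ^q x - x = q y + ∑_{j<q} (ρ^j y - y)` with every `ρ^j y - y` divisible by
`π y`, so `ρ^q ∈ G_{i+1}` forces `ρ ∈ G_{i+1}` whenever `q` is a unit. Taking `q` the order of
`ρ` shows that `ρ` lies in every `G_i`, i.e. `ρ = 1`.
-/

lemma WithTop.int_lt_one_iff {x : WithTop ℤ} : x < 1 ↔ x ≤ 0 := by
  induction x using WithTop.recTopCoe with
  | top => simp
  | coe n => norm_cast; omega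

lemma WithTop.int_coe_le_sub_coe_iff {a : WithTop ℤ} {m n : ℤ} :
    (m : WithTop ℤ) ≤ a - n ↔ ((m + n : ℤ) : WithTop ℤ) ≤ a := by
  induction a using WithTop.recTopCoe with
  | top => simp
  | coe a => norm_cast; omega

lemma AlgEquiv.pow_apply_sub_self_eq_sum {K L : Type*} [Field K] [Field L] [Algebra K L]
    (σ : L ≃ₐ[K] L) (x : L) (n : ℕ) :
    (σ ^ n) x - x = ∑ j ∈ Finset.range n, (σ ^ j) (σ x - x) := by
  have := Finset.sum_range_sub (fun j => (σ ^ j) x) n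
  rw [pow_zero, AlgEquiv.one_apply] at this
  rw [← this]
  refine Finset.sum_congr rfl fun j _ => ?_
  rw [map_sub, pow_succ, AlgEquiv.mul_apply]

theorem exists_generator_modulo_of_ker_iff {G R : Type*} [Group G] [CommRing R] [IsDomain R]
    {H : Subgroup G} [Finite H] (θ : H →* Rˣ) {P : G → Prop}
    (hθ : ∀ h : H, θ h = 1 ↔ P h) :
    ∃ σ ∈ H, ∃ m : ℕ, 0 < m ∧ P (σ ^ m) ∧ (∀ j, 0 < j → j < m → ¬ P (σ ^ j)) ∧
      (∀ τ ∈ H, ∃ j : ℕ, P (τ * (σ ^ j)⁻¹)) ∧ (m : R) ≠ 0 := by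
  have : Finite θ.range := Finite.of_surjective _ θ.rangeRestrict_surjective
  obtain ⟨⟨_, s, rfl⟩, hs⟩ := IsCyclic.exists_generator (α := θ.range)
  have hpow : ∀ t : H, ∃ j : ℕ, θ s ^ j = θ t := fun t => by
    obtain ⟨j, hj⟩ := mem_powers_iff_mem_zpowers.2 (hs ⟨θ t, t, rfl⟩)
    exact ⟨j, congrArg Subtype.val hj⟩
  have hfin : IsOfFinOrder (θ s) := θ.isOfFinOrder (isOfFinOrder_of_finite s)
  have hker : ∀ j : ℕ, P ((s : G) ^ j) ↔ orderOf (θ s) ∣ j := fun j => by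
    rw [orderOf_dvd_iff_pow_eq_one, ← map_pow, hθ, Subgroup.coe_pow]
  refine ⟨s, s.2, orderOf (θ s), hfin.orderOf_pos, (hker _).2 dvd_rfl,
    fun j hj hjm hPj => (Nat.le_of_dvd hj ((hker j).1 hPj)).not_gt hjm, fun τ hτ => ?_, ?_⟩
  · obtain ⟨j, hj⟩ := hpow ⟨τ, hτ⟩
    refine ⟨j, (hθ (⟨τ, hτ⟩ * (s ^ j)⁻¹)).1 ?_⟩
    rw [map_mul, map_inv, map_pow, hj, mul_inv_cancel]
  · have : NeZero (orderOf (θ s)) := ⟨hfin.orderOf_pos.ne'⟩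
    exact (IsPrimitiveRoot.coe_units_iff.2 (IsPrimitiveRoot.orderOf (θ s))).neZero'.out

namespace AddValuation

variable {L : Type*} [Field L] (w : AddValuation L (WithTop ℤ))

def integers : Subring L where
  carrier := {x | 0 ≤ w x}
  mul_mem' {a b} ha hb := by
    simp only [Set.mem_ofPred_eq, map_mul] at *
    exact add_nonneg ha hb
  one_mem' := by simp
  add_mem' ha hb := le_trans (le_min ha hb) (w.map_add _ _)
  zero_mem' := by simp
  neg_mem' := by simp

lemma mem_integers {x : L} : x ∈ w.integers ↔ 0 ≤ w x := Iff.rfl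

def maxIdeal : Ideal w.integers where
  carrier := {x | 1 ≤ w x}
  add_mem' ha hb := le_trans (le_min ha hb) (w.map_add _ _)
  zero_mem' := by simp
  smul_mem' c {x} hx := by
    simp only [Set.mem_ofPred_eq, smul_eq_mul, Subring.coe_mul, map_mul] at *
    simpa using add_le_add c.2 hx

lemma mem_maxIdeal {x : w.integers} : x ∈ w.maxIdeal ↔ 1 ≤ w x := Iff.rfl

instance : w.maxIdeal.IsPrime where
  ne_top' h := by
    have : (1 : WithTop ℤ) ≤ w (1 : w.integers) := (w.mem_maxIdeal).1 (h ▸ Submodule.mem_top)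
    simp only [OneMemClass.coe_one, map_one] at this
    exact absurd this (by decide)
  mem_or_mem' {a b} hab := by
    simp only [mem_maxIdeal, Subring.coe_mul, map_mul] at *
    by_contra! h
    rw [WithTop.int_lt_one_iff, WithTop.int_lt_one_iff] at h
    exact (add_nonpos h.1 h.2).not_gt (lt_of_lt_of_le (by norm_num) hab)

lemma mk_eq_mk_iff {a b : w.integers} :
    Ideal.Quotient.mk w.maxIdeal a = Ideal.Quotient.mk w.maxIdeal b ↔ 1 ≤ w (a - b) :=
  Ideal.Quotient.mk_eq_mk_iff_sub_mem a b

lemma natCast_eq_zero_of_one_le {n : ℕ} (hn : 1 ≤ w n) :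
    (n : w.integers ⧸ w.maxIdeal) = 0 := by
  rw [← map_natCast (Ideal.Quotient.mk w.maxIdeal), Ideal.Quotient.eq_zero_iff_mem, mem_maxIdeal]
  simpa using hn

variable {w}

lemma exists_eval_add_eq {f : L[X]} (hf : ∀ n, 0 ≤ w (f.coeff n)) {x y : L} (hx : 0 ≤ w x)
    (hy : 0 ≤ w y) :
    ∃ k, 0 ≤ w k ∧ f.eval (x + y) = f.eval x + f.derivative.eval x * y + k * y ^ 2 := by
  have hsub : (f.coeffs : Set L) ⊆ w.integers := fun c hc => by
    obtain ⟨n, -, rfl⟩ := mem_coeffs_iff.1 hc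
    exact hf n
  set F := f.toSubring w.integers hsub
  have hF : ∀ a : w.integers, ((F.eval a : w.integers) : L) = f.eval (a : L) := fun a => by
    conv_rhs => rw [← map_toSubring f w.integers hsub]
    rw [eval_map]; exact (eval₂_hom w.integers.subtype a).symm
  have hF' : ∀ a : w.integers,
      ((F.derivative.eval a : w.integers) : L) = f.derivative.eval (a : L) := fun a => by
    conv_rhs => rw [← map_toSubring f w.integers hsub]
    rw [derivative_map, eval_map]; exact (eval₂_hom w.integers.subtype a).symm
  obtain ⟨k, hk⟩ := F.binomExpansion ⟨x, hx⟩ ⟨y, hy⟩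
  refine ⟨k, k.2, ?_⟩
  have := congrArg Subtype.val hk
  simp only [Subring.coe_add, Subring.coe_mul, SubmonoidClass.coe_pow, hF, hF'] at this
  exact this

variable {K : Type*} [Field K] [Algebra K L]

lemma min_le_map_apply {i : ℕ} {σ : L ≃ₐ[K] L}
    (hσ : ∀ x, 0 ≤ w x → (i + 1 : WithTop ℤ) ≤ w (σ x - x)) {x : L} (hx : 0 ≤ w x) :
    min (w x) (i + 1) ≤ w (σ x) := by
  simpa using (min_le_min_left _ (hσ x hx)).trans (w.map_add x (σ x - x))

lemma map_symm_apply_nonneg {i : ℕ} {σ : L ≃ₐ[K] L}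
    (hσ : ∀ x, 0 ≤ w x → (i + 1 : WithTop ℤ) ≤ w (σ x - x)) {x : L} (hx : 0 ≤ w x) :
    0 ≤ w (σ.symm x) := by
  by_contra! hneg
  have hpos : 0 < w (σ.symm x)⁻¹ := by
    rw [map_inv]; exact LinearOrderedAddCommGroupWithTop.neg_pos.2 (Or.inl hneg)
  have := (lt_min hpos (by positivity)).trans_le (min_le_map_apply hσ hpos.le)
  rw [map_inv₀, AlgEquiv.apply_symm_apply, map_inv,
    LinearOrderedAddCommGroupWithTop.neg_pos] at this
  rcases this with h | h
  · exact h.not_ge hx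
  · rw [w.top_iff] at h
    simp [h] at hneg

variable (w K) in
def ramificationGroup (i : ℕ) : Subgroup (L ≃ₐ[K] L) where
  carrier := {σ | ∀ x, 0 ≤ w x → (i + 1 : WithTop ℤ) ≤ w (σ x - x)}
  one_mem' x _ := by simp
  mul_mem' {σ τ} hσ hτ x hx := by
    have hτx : 0 ≤ w (τ x) := le_trans (le_min hx (by positivity)) (min_le_map_apply hτ hx)
    simpa using le_trans (le_min (hσ _ hτx) (hτ x hx)) (w.map_add _ _)
  inv_mem' {σ} hσ x hx := by
    have := hσ _ (map_symm_apply_nonneg hσ hx)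
    rwa [AlgEquiv.apply_symm_apply, ← w.map_neg, neg_sub] at this

lemma ramificationGroup_antitone : Antitone (w.ramificationGroup K) :=
  fun _ _ hij _ hσ x hx => le_trans (by gcongr) (hσ x hx)

lemma min_le_map_apply_mul_sub (σ : L ≃ₐ[K] L) (a b : L) :
    min (w (σ a) + w (σ b - b)) (w b + w (σ a - a)) ≤ w (σ (a * b) - a * b) := by
  have : σ (a * b) - a * b = σ a * (σ b - b) + b * (σ a - a) := by
    rw [_root_.map_mul]; ring
  rw [this, ← AddValuation.map_mul, ← AddValuation.map_mul]
  exact w.map_add _ _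

lemma eq_one_of_forall_mem_ramificationGroup {σ : L ≃ₐ[K] L}
    (h : ∀ i, σ ∈ w.ramificationGroup K i) : σ = 1 := by
  have hO : ∀ x, 0 ≤ w x → σ x = x := fun x hx => by
    rw [← sub_eq_zero, ← w.top_iff]
    have := fun i => h i x hx
    generalize w (σ x - x) = a at this
    induction a using WithTop.recTopCoe with
    | top => rfl
    | coe a => have := this a.toNat; norm_cast at this; omega
  ext x
  rcases le_or_gt 0 (w x) with hx | hx
  · exact hO x hx
  · simpa using hO x⁻¹ (by
      rw [map_inv]; exact (LinearOrderedAddCommGroupWithTop.neg_pos.2 (Or.inl hx)).le)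

variable {π : L} (hπ : w π = 1)
include hπ

lemma ne_zero_of_map_eq_one : π ≠ 0 := by
  rintro rfl
  rw [AddValuation.map_zero] at hπ
  exact WithTop.top_ne_one hπ

lemma add_le_map_apply_sub {i : ℕ} {σ : L ≃ₐ[K] L} (hσ : σ ∈ w.ramificationGroup K i)
    {z : L} (hz : 0 ≤ w z) : w z + i ≤ w (σ z - z) := by
  have hσπ : 1 ≤ w (σ π) := by
    have := min_le_map_apply hσ (hπ ▸ zero_le_one)
    rwa [hπ, min_eq_left (by exact_mod_cast Nat.le_add_left 1 i)] at this
  suffices ∀ n : ℕ, ∀ z, w z = n → (n + i : WithTop ℤ) ≤ w (σ z - z) by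
    induction hwz : w z using WithTop.recTopCoe with
    | top => simp [w.top_iff.1 hwz]
    | coe k =>
      lift k to ℕ using (by rw [hwz] at hz; exact_mod_cast hz)
      simpa using this k z (by simpa using hwz)
  intro n
  induction n with
  | zero =>
    intro z hz
    refine le_trans ?_ (hσ z (by simp [hz]))
    simpa using le_add_of_nonneg_right zero_le_one
  | succ n ih =>
    intro z hz
    have hb : w (z / π) = n := by simp [hz, hπ]
    have := w.min_le_map_apply_mul_sub σ π (z / π)
    rw [mul_div_cancel₀ _ (ne_zero_of_map_eq_one hπ)] at this
    refine le_trans (le_min ?_ ?_) this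
    · calc ((n + 1 : ℕ) + i : WithTop ℤ) = 1 + (n + i) := by push_cast; abel
        _ ≤ _ := add_le_add hσπ (ih _ hb)
    · calc ((n + 1 : ℕ) + i : WithTop ℤ) = n + (i + 1) := by push_cast; abel
        _ ≤ _ := by rw [hb]; exact add_le_add_right (hσ π (by simp [hπ])) _

lemma map_apply_of_mem_ramificationGroup_zero {σ : L ≃ₐ[K] L}
    (hσ : σ ∈ w.ramificationGroup K 0) (x : L) : w (σ x) = w x := by
  have hle : ∀ τ ∈ w.ramificationGroup K 0, ∀ x, 0 ≤ w x → w x ≤ w (τ x) := by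
    intro τ hτ x hx
    have := w.map_add x (τ x - x)
    simpa using le_trans (le_min le_rfl (by simpa using add_le_map_apply_sub hπ hτ hx)) this
  have hO : ∀ x, 0 ≤ w x → w (σ x) = w x := fun x hx => by
    refine le_antisymm ?_ (hle σ hσ x hx)
    simpa using hle σ⁻¹ (inv_mem hσ) (σ x) (hx.trans (hle σ hσ x hx))
  rcases le_or_gt 0 (w x) with hx | hx
  · exact hO x hx
  · have := hO x⁻¹ (by
      rw [map_inv]; exact (LinearOrderedAddCommGroupWithTop.neg_pos.2 (Or.inl hx)).le)
    rw [map_inv₀, map_inv, map_inv] at this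
    exact neg_injective this

lemma map_apply_div_eq_zero {σ : L ≃ₐ[K] L} (hσ : σ ∈ w.ramificationGroup K 0) :
    w (σ π / π) = 0 := by
  rw [map_div, map_apply_of_mem_ramificationGroup_zero hπ hσ, hπ]
  exact LinearOrderedAddCommGroupWithTop.sub_self_eq_zero_iff_ne_top.2 (by simp)

variable (K) in
/-- Serre's `θ₀ : G₀ → k_L^×`, `σ ↦ σπ/π mod 𝔪`. -/
noncomputable def inertiaResidueHom : w.ramificationGroup K 0 →* (w.integers ⧸ w.maxIdeal)ˣ :=
  MonoidHom.toHomUnits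
    { toFun σ := Ideal.Quotient.mk _
        ⟨(σ : L ≃ₐ[K] L) π / π, (w.mem_integers).2 (map_apply_div_eq_zero hπ σ.2).ge⟩
      map_one' := by
        rw [← _root_.map_one (Ideal.Quotient.mk w.maxIdeal)]
        congr
        simp [div_self (ne_zero_of_map_eq_one hπ)]
      map_mul' := by
        rintro ⟨σ, hσ⟩ ⟨τ, hτ⟩
        rw [← _root_.map_mul, mk_eq_mk_iff]
        have hπ0 := ne_zero_of_map_eq_one hπ
        have key :
            (σ * τ) π / π - σ π / π * (τ π / π) = σ π / π * (σ (τ π / π) - τ π / π) := by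
          have : σ π ≠ 0 := by simpa using hπ0
          rw [AlgEquiv.mul_apply, map_div₀]
          field_simp
        simp only [Subgroup.coe_mul, Subring.coe_mul]
        rw [key, AddValuation.map_mul, map_apply_div_eq_zero hπ hσ, zero_add]
        simpa using hσ _ (map_apply_div_eq_zero hπ hτ).ge }

lemma inertiaResidueHom_eq_one_iff (σ : w.ramificationGroup K 0) :
    inertiaResidueHom K hπ σ = 1 ↔ 2 ≤ w ((σ : L ≃ₐ[K] L) π - π) := by
  rw [Units.ext_iff, Units.val_one]
  change Ideal.Quotient.mk w.maxIdeal _ = 1 ↔ _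
  rw [← _root_.map_one (Ideal.Quotient.mk w.maxIdeal), mk_eq_mk_iff, Subring.coe_one,
    div_sub_one (ne_zero_of_map_eq_one hπ), map_div, hπ]
  simpa using
    WithTop.int_coe_le_sub_coe_iff (a := w ((σ : L ≃ₐ[K] L) π - π)) (m := 1) (n := 1)

lemma two_le_map_apply_sub_of_one_le {σ : L ≃ₐ[K] L} (hσ : σ ∈ w.ramificationGroup K 0)
    (hσπ : 2 ≤ w (σ π - π)) {c : L} (hc : 1 ≤ w c) : 2 ≤ w (σ c - c) := by
  have hb : 0 ≤ w (c / π) := by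
    rw [map_div, hπ]
    exact (by simpa using WithTop.int_coe_le_sub_coe_iff (a := w c) (m := 0) (n := 1) :
      0 ≤ w c - 1 ↔ 1 ≤ w c).2 hc
  have := w.min_le_map_apply_mul_sub σ π (c / π)
  rw [mul_div_cancel₀ _ (ne_zero_of_map_eq_one hπ),
    map_apply_of_mem_ramificationGroup_zero hπ hσ, hπ] at this
  refine le_trans (le_min ?_ ?_) this
  · simpa [one_add_one_eq_two] using add_le_add_right (hσ _ hb) 1
  · simpa using add_le_add hb hσπ

/-- Expanding `g (x + y)` with `y = σ x - x` to first order gives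
`g'(x) y ≡ σ (g x) - g x ≡ 0 mod 𝔪²`, and `g'(x)` is a unit. -/
lemma two_le_map_apply_sub {σ : L ≃ₐ[K] L} (hσ : σ ∈ w.ramificationGroup K 0)
    (hσπ : 2 ≤ w (σ π - π)) {x : L} (hx : 0 ≤ w x) {g : K[X]}
    (hg : ∀ n, 0 ≤ w (algebraMap K L (g.coeff n))) (hgx : 1 ≤ w (aeval x g))
    (hg'x : w (aeval x (derivative g)) = 0) : 2 ≤ w (σ x - x) := by
  set y := σ x - x
  have hy : 1 ≤ w y := by simpa using hσ x hx
  obtain ⟨k, hk, hkx⟩ := exists_eval_add_eq (f := g.map (algebraMap K L)) (by simpa using hg) hx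
    (zero_le_one.trans hy)
  rw [add_sub_cancel, derivative_map, eval_map_algebraMap, eval_map_algebraMap,
    eval_map_algebraMap, aeval_algHom_apply] at hkx
  have hlin : aeval x (derivative g) * y = (σ (aeval x g) - aeval x g) - k * y ^ 2 := by
    rw [hkx]; ring
  have hky : 2 ≤ w (k * y ^ 2) := by
    rw [AddValuation.map_mul, AddValuation.map_pow]
    simpa using add_le_add hk (nsmul_le_nsmul_right hy 2)
  calc 2 ≤ w (aeval x (derivative g) * y) := by
        rw [hlin]
        exact (le_min (two_le_map_apply_sub_of_one_le hπ hσ hσπ hgx) hky).trans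
          (w.map_sub _ _)
    _ = w y := by rw [AddValuation.map_mul, hg'x, zero_add]

lemma mem_ramificationGroup_succ_of_pow_mem {i : ℕ} (hi : 1 ≤ i) {ρ : L ≃ₐ[K] L}
    (hρ : ρ ∈ w.ramificationGroup K i) {q : ℕ} (hq : w q = 0)
    (hρq : ρ ^ q ∈ w.ramificationGroup K (i + 1)) : ρ ∈ w.ramificationGroup K (i + 1) := by
  intro x hx
  set y := ρ x - x
  have hy : (i + 1 : WithTop ℤ) ≤ w y := hρ x hx
  have hy0 : 0 ≤ w y := le_trans (by positivity) hy
  have hqy : (q : L) * y = ((ρ ^ q) x - x) - ∑ j ∈ Finset.range q, ((ρ ^ j) y - y) := by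
    rw [ρ.pow_apply_sub_self_eq_sum, Finset.sum_sub_distrib, Finset.sum_const, Finset.card_range,
      nsmul_eq_mul]
    ring
  have hsum : w y + 1 ≤ w (∑ j ∈ Finset.range q, ((ρ ^ j) y - y)) := by
    refine w.map_le_sum fun j _ => le_trans ?_ (add_le_map_apply_sub hπ (pow_mem hρ j) hy0)
    exact add_le_add_right (by exact_mod_cast hi) _
  have key : min ((i + 1 : ℕ) + 1 : WithTop ℤ) (w y + 1) ≤ w y := by
    have := le_trans (min_le_min (hρq x hx) hsum) (w.map_sub _ _)
    rwa [← hqy, AddValuation.map_mul, hq, zero_add] at this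
  show _ ≤ w y
  generalize w y = a at key
  induction a using WithTop.recTopCoe with
  | top => exact le_top
  | coe a => norm_cast at key ⊢; omega

lemma ramificationGroup_one_eq_bot [Finite (L ≃ₐ[K] L)]
    (hw : ∀ n : ℕ, n ≠ 0 → w n = 0) : w.ramificationGroup K 1 = ⊥ := by
  refine (Subgroup.eq_bot_iff_forall _).2 fun τ hτ =>
    eq_one_of_forall_mem_ramificationGroup (w := w) ?_
  have hsucc : ∀ i, τ ∈ w.ramificationGroup K (i + 1) := by
    intro i
    induction i with
    | zero => exact hτ
    | succ i ih =>
      refine mem_ramificationGroup_succ_of_pow_mem hπ (by omega) ih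
        (hw _ (orderOf_pos τ).ne') ?_
      rw [pow_orderOf_eq_one]
      exact one_mem _
  rintro (_ | i)
  · exact ramificationGroup_antitone (Nat.zero_le 1) hτ
  · exact hsucc i

end AddValuation

namespace IsDiscreteValuationOn

variable {L : Type*} [Field L] {v : L → ℤ} (hv : IsDiscreteValuationOn L v)
include hv

lemma apply_one : v 1 = 0 := by
  have := hv.2.1 1 1 one_ne_zero one_ne_zero
  rw [mul_one] at this
  omega

noncomputable def addValuation : AddValuation L (WithTop ℤ) :=
  AddValuation.of (fun x => if x = 0 then ⊤ else (v x : WithTop ℤ)) (if_pos rfl)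
    (by simp [hv.apply_one])
    (fun x y => by
      by_cases hx : x = 0; · simp [hx]
      by_cases hy : y = 0; · simp [hy]
      by_cases hxy : x + y = 0; · simp [hxy]
      simp only [hx, hy, hxy, if_false]
      exact_mod_cast hv.2.2 x y hx hy hxy)
    (fun x y => by
      by_cases hx : x = 0; · simp [hx]
      by_cases hy : y = 0; · simp [hy]
      simp only [hx, hy, mul_eq_zero, or_self, if_false]
      exact_mod_cast hv.2.1 x y hx hy)

lemma addValuation_of_ne_zero {x : L} (hx : x ≠ 0) : hv.addValuation x = v x := if_neg hx

lemma coe_le_addValuation_iff {c : ℤ} {x : L} :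
    (c : WithTop ℤ) ≤ hv.addValuation x ↔ x = 0 ∨ c ≤ v x := by
  by_cases hx : x = 0
  · simp [hx]
  · simp [hx, hv.addValuation_of_ne_zero hx]

lemma inIntegers_iff {x : L} : InIntegers v x ↔ 0 ≤ hv.addValuation x :=
  (hv.coe_le_addValuation_iff (c := 0)).symm

lemma exists_addValuation_eq_one : ∃ π, hv.addValuation π = 1 := by
  obtain ⟨π, hπ0, hπ⟩ := hv.1 1
  exact ⟨π, by rw [hv.addValuation_of_ne_zero hπ0, hπ]; rfl⟩

lemma one_le_addValuation_natCast {p : ℕ} (hp : ResidueCharIs v p) (hpp : p.Prime) :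
    1 ≤ hv.addValuation p := by
  have : ((p : L) = 0 ∨ 0 < v p) := by
    rcases hp with ⟨-, h⟩ | ⟨rfl, -⟩
    · exact h
    · exact absurd hpp Nat.not_prime_zero
  exact_mod_cast (hv.coe_le_addValuation_iff (c := 1)).2 this

lemma addValuation_natCast_eq_zero (hp : ResidueCharIs v 0) (n : ℕ) (hn : n ≠ 0) :
    hv.addValuation n = 0 := by
  have hunit : ∀ q : ℕ, q.Prime → (q : L) ≠ 0 ∧ v q = 0 := by
    rcases hp with ⟨h, -⟩ | ⟨-, h⟩
    · exact absurd h Nat.not_prime_zero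
    · exact h
  induction n using Nat.recOnMul with
  | zero => exact absurd rfl hn
  | one => simp
  | prime q hq => rw [hv.addValuation_of_ne_zero (hunit q hq).1, (hunit q hq).2]; rfl
  | mul a b ha hb =>
    rw [Nat.cast_mul, AddValuation.map_mul, ha (left_ne_zero_of_mul hn),
      hb (right_ne_zero_of_mul hn), add_zero]

variable {K : Type*} [Field K] [Algebra K L]

lemma inRamificationGroup_iff (i : ℕ) (σ : L ≃ₐ[K] L) :
    InRamificationGroup K v i σ ↔ σ ∈ hv.addValuation.ramificationGroup K i := by
  refine forall_congr' fun x => imp_congr hv.inIntegers_iff ?_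
  rw [← sub_eq_zero, ← hv.coe_le_addValuation_iff]
  push_cast
  rfl

lemma inertiaResidueHom_eq_one_iff (hsep : ResidueSeparable K L v) {π : L}
    (hπ : hv.addValuation π = 1) (σ : hv.addValuation.ramificationGroup K 0) :
    AddValuation.inertiaResidueHom K hπ σ = 1 ↔ InRamificationGroup K v 1 σ := by
  have h1 := hv.inRamificationGroup_iff 1 (σ : L ≃ₐ[K] L)
  rw [Nat.cast_one] at h1
  rw [AddValuation.inertiaResidueHom_eq_one_iff, h1]
  refine ⟨fun hσπ x hx => ?_,
    fun hσ => by simpa [one_add_one_eq_two] using hσ π (by simp [hπ])⟩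
  obtain ⟨g, hg, hgx, hg'x0, hg'x⟩ := hsep x (hv.inIntegers_iff.2 hx)
  have hgx' : 1 ≤ hv.addValuation (aeval x g) := by
    exact_mod_cast (hv.coe_le_addValuation_iff (c := 1)).2 (hgx.imp_right fun h => by omega)
  have hg'x' : hv.addValuation (aeval x (derivative g)) = 0 := by
    rw [hv.addValuation_of_ne_zero hg'x0, hg'x]; rfl
  simpa [one_add_one_eq_two] using AddValuation.two_le_map_apply_sub hπ σ.2 hσπ hx
    (fun n => hv.inIntegers_iff.1 (hg n)) hgx' hg'x'

end IsDiscreteValuationOn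

theorem inertia_mod_wild_is_cyclic_prime_to_p_general
    (K L : Type*) [Field K] [Field L] [Algebra K L]
    [FiniteDimensional K L]
    (v : L → ℤ) (hv : IsDiscreteValuationOn L v)
    (hsep : ResidueSeparable K L v)
    (p : ℕ) (hp : ResidueCharIs v p) :
    ∃ (σ : L ≃ₐ[K] L) (m : ℕ), 0 < m ∧
      InRamificationGroup K v 0 σ ∧
      InRamificationGroup K v 1 (σ ^ m) ∧
      (∀ j : ℕ, 0 < j → j < m → ¬ InRamificationGroup K v 1 (σ ^ j)) ∧
      (∀ τ : L ≃ₐ[K] L, InRamificationGroup K v 0 τ →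
        ∃ j : ℕ, InRamificationGroup K v 1 (τ * (σ ^ j)⁻¹)) ∧
      (p.Prime → ¬ p ∣ m) ∧
      (p = 0 → ∀ τ : L ≃ₐ[K] L, InRamificationGroup K v 1 τ → τ = 1) := by
  obtain ⟨π, hπ⟩ := hv.exists_addValuation_eq_one
  obtain ⟨σ, hσ, m, hm, hσm, hmin, hgen, hmR⟩ :=
    exists_generator_modulo_of_ker_iff _ (hv.inertiaResidueHom_eq_one_iff hsep hπ)
  refine ⟨σ, m, hm, (hv.inRamificationGroup_iff 0 σ).2 hσ, hσm, hmin,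
    fun τ hτ => hgen τ ((hv.inRamificationGroup_iff 0 τ).1 hτ), fun hpp ⟨k, hk⟩ => hmR ?_,
    fun hp0 τ hτ => ?_⟩
  · rw [hk, Nat.cast_mul, AddValuation.natCast_eq_zero_of_one_le _
      (hv.one_le_addValuation_natCast hp hpp), zero_mul]
  · subst hp0
    refine (Subgroup.eq_bot_iff_forall _).1 ?_ τ ((hv.inRamificationGroup_iff 1 τ).1 hτ)
    exact AddValuation.ramificationGroup_one_eq_bot hπ (hv.addValuation_natCast_eq_zero hp)

/-- Let `L/K` be a finite Galois extension of complete discretely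
valued fields with separable residue extension of characteristic `p`.  Then `G₀/G₁` is
a cyclic group of order prime to `p` (where, if `p = 0`, this means that `G₁` is
trivial and `G₀` is cyclic):  there is `σ ∈ G₀` whose class generates `G₀/G₁`, of exact
order `m` modulo `G₁` with `p ∤ m` when `p` is prime, and `G₁ = 1` when `p = 0`. -/
theorem inertia_mod_wild_is_cyclic_prime_to_p
    (K L : Type*) [Field K] [Field L] [Algebra K L]
    [FiniteDimensional K L] [IsGalois K L]
    (v : L → ℤ) (hv : IsDiscreteValuationOn L v)
    (hcomplL : VComplete v)
    (hcomplK : VComplete (fun y : K => v (algebraMap K L y)))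
    (hsep : ResidueSeparable K L v)
    (p : ℕ) (hp : ResidueCharIs v p) :
    ∃ (σ : L ≃ₐ[K] L) (m : ℕ), 0 < m ∧
      InRamificationGroup K v 0 σ ∧
      InRamificationGroup K v 1 (σ ^ m) ∧
      (∀ j : ℕ, 0 < j → j < m → ¬ InRamificationGroup K v 1 (σ ^ j)) ∧
      (∀ τ : L ≃ₐ[K] L, InRamificationGroup K v 0 τ →
        ∃ j : ℕ, InRamificationGroup K v 1 (τ * (σ ^ j)⁻¹)) ∧
      (p.Prime → ¬ p ∣ m) ∧
      (p = 0 → ∀ τ : L ≃ₐ[K] L, InRamificationGroup K v 1 τ → τ = 1) :=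
  inertia_mod_wild_is_cyclic_prime_to_p_general K L v hv hsep p hp
end
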